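/- arXiv:2105.13863 — 6 statements merged into one kernel-verified Lean document; each statement's English description precedes it below -/
import Mathlib

section
/- Let n and k be integers with 4 ≤ k ≤ n−1, and let X ⊂ ℝ² be an n-independent node set with #X = d(n,k−3)+3 such that dim P_{k,X} ≥ 7. Then dim P_{k−1,X} ≥ 3, i.e., there are three linearly independent curves of degree ≤ k−1 passing through all the nodes of X. -/
open MvPolynomial

noncomputable section

/-- A node (point) in the plane. -/
abbrev Pt : Type := Fin 2 → ℝ

/-- `p` is an `n`-fundamental polynomial of the node `A` with respect to the node set `X`. -/
def IsFund (n : ℕ) (X : Finset Pt) (A : Pt) (p : MvPolynomial (Fin 2) ℝ) : Prop :=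
  p.totalDegree ≤ n ∧ eval A p = 1 ∧ ∀ B ∈ X, B ≠ A → eval B p = 0

/-- The node set `X` is `n`-independent. -/
def NIndep (n : ℕ) (X : Finset Pt) : Prop := ∀ A ∈ X, ∃ p, IsFund n X A p

/-- `N_m = dim Π_m = (m+1)(m+2)/2`. -/
def Nn (m : ℕ) : ℕ := (m + 1) * (m + 2) / 2

/-- `d(n,k) = N_n - N_{n-k}`. -/
def dnk (n k : ℕ) : ℕ := Nn n - Nn (n - k)

/-- The space `P_{k,X}` of polynomials of total degree at most `k` vanishing on `X`. -/
def PkX (k : ℕ) (X : Finset Pt) : Submodule ℝ (MvPolynomial (Fin 2) ℝ) :=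
  restrictTotalDegree (Fin 2) ℝ k ⊓
    ⨅ A ∈ X, LinearMap.ker (aeval (R := ℝ) (S₁ := ℝ) (A : Fin 2 → ℝ)).toLinearMap

/-!
Write `D_j = dim P_{j,X}` and let `W_j` be the space of degree-`j` homogeneous parts of elements
of `P_{j,X}`, so that `D_{j+1} = D_j + dim W_{j+1}`. Multiplying by the two variables shows
`dim W_{j+1} > dim W_j` whenever `W_j ≠ 0`. If `D_{k-1} ≤ 2` then `dim W_k ≥ 5`, hence
`D_n ≥ 7 + ∑_{t=1}^{n-k} (5 + t)`. But `n`-independence gives `D_n = N_n - #X = N_{n-k+3} - 3`,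
which is smaller as soon as `n > k`.
-/

section Homogeneous

variable {σ R : Type*} [CommSemiring R]

lemma homogeneousComponent_succ_mul_X (n : ℕ) (p : MvPolynomial σ R) (i : σ) :
    homogeneousComponent (n + 1) (p * X i) = homogeneousComponent n p * X i := by
  induction p using MvPolynomial.induction_on' with
  | monomial d c =>
    have hdeg : (d + Finsupp.single i 1).degree = d.degree + 1 := by
      rw [map_add, Finsupp.degree_single]
    rw [X, monomial_mul, mul_one,
      homogeneousComponent_of_mem (isHomogeneous_monomial (d := d) c rfl),
      homogeneousComponent_of_mem (isHomogeneous_monomial c hdeg)]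
    split_ifs <;> simp_all [monomial_mul]
  | add p q hp hq => simp only [add_mul, map_add, hp, hq]

lemma totalDegree_le_iff_homogeneousComponent_eq_zero {p : MvPolynomial σ R} {n : ℕ}
    (hp : p.totalDegree ≤ n + 1) :
    p.totalDegree ≤ n ↔ homogeneousComponent (n + 1) p = 0 := by
  refine ⟨fun h => homogeneousComponent_eq_zero _ _ (by omega), fun h => ?_⟩
  refine Finset.sup_le fun d hd => ?_
  have hne : d.degree ≠ n + 1 := fun hdeg => mem_support_iff.mp hd <| by
    simpa [coeff_homogeneousComponent, hdeg] using congrArg (coeff d) h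
  have := (le_totalDegree hd).trans hp
  exact Nat.le_of_lt_succ (lt_of_le_of_ne this hne)

end Homogeneous

lemma two_mul_Nn (m : ℕ) : 2 * Nn m = (m + 1) * (m + 2) :=
  Nat.mul_div_cancel' (Nat.even_mul_succ_self (m + 1)).two_dvd

lemma Nn_mono : Monotone Nn := fun _ _ h =>
  Nat.div_le_div_right (Nat.mul_le_mul (by omega) (by omega))

lemma sum_range_succ_eq_Nn (m : ℕ) : ∑ j ∈ Finset.range (m + 1), (j + 1) = Nn m := by
  induction m with
  | zero => rfl
  | succ m ih =>
    have h := two_mul_Nn (m + 1)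
    have h' := two_mul_Nn m
    rw [Finset.sum_range_succ, ih]
    nlinarith

lemma finrank_restrictTotalDegree_fin_two (K : Type*) [CommRing K] [Nontrivial K] (m : ℕ) :
    Module.finrank K (restrictTotalDegree (Fin 2) K m) = Nn m := by
  let T := (Finset.range (m + 1)).biUnion Finset.HasAntidiagonal.antidiagonal
  have hT : T.card = Nn m := by
    rw [Finset.card_biUnion fun a _ b _ hab => Finset.disjoint_left.mpr fun q ha hb => hab <| by
      rw [Finset.HasAntidiagonal.mem_antidiagonal] at ha hb
      omega]
    simpa only [Finset.Nat.card_antidiagonal] using sum_range_succ_eq_Nn m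
  rw [restrictTotalDegree, Module.finrank_eq_nat_card_basis (basisRestrictSupport K _),
    ← hT, ← Nat.card_eq_finsetCard]
  refine Nat.card_congr <|
    (Finsupp.equivFunOnFinite.trans (piFinTwoEquiv fun _ => ℕ)).subtypeEquiv fun d => ?_
  simp [T, Finsupp.sum_fintype, Fin.sum_univ_two]

lemma finrank_map_add_finrank_inf_ker {K V W : Type*} [DivisionRing K] [AddCommGroup V]
    [Module K V] [AddCommGroup W] [Module K W] (f : V →ₗ[K] W) (q : Submodule K V)
    [FiniteDimensional K q] :
    Module.finrank K (q.map f) + Module.finrank K ↥(q ⊓ LinearMap.ker f) =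
      Module.finrank K q := by
  have hker : LinearMap.ker (f.domRestrict q) = (q ⊓ LinearMap.ker f).comap q.subtype := by
    rw [LinearMap.ker_domRestrict, Submodule.comap_inf, Submodule.comap_subtype_self,
      top_inf_eq]
  rw [← LinearMap.range_domRestrict, ← (Submodule.comapSubtypeEquivOfLe inf_le_left).finrank_eq,
    ← hker]
  exact LinearMap.finrank_range_add_finrank_ker _

lemma mem_PkX {k : ℕ} {X : Finset Pt} {p : MvPolynomial (Fin 2) ℝ} :
    p ∈ PkX k X ↔ p.totalDegree ≤ k ∧ ∀ A ∈ X, eval A p = 0 := by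
  simp [PkX, Submodule.mem_iInf, mem_restrictTotalDegree]

instance (k : ℕ) (X : Finset Pt) : FiniteDimensional ℝ (PkX k X) :=
  Submodule.finiteDimensional_of_le inf_le_left

lemma mul_X_mem_PkX {k : ℕ} {X : Finset Pt} {p : MvPolynomial (Fin 2) ℝ} (hp : p ∈ PkX k X)
    (i : Fin 2) : p * MvPolynomial.X i ∈ PkX (k + 1) X := by
  rw [mem_PkX] at hp ⊢
  refine ⟨(totalDegree_mul _ _).trans ?_, fun A hA => by simp [hp.2 A hA]⟩
  rw [totalDegree_X]
  omega

lemma PkX_succ_inf_ker_homogeneousComponent (k : ℕ) (X : Finset Pt) :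
    PkX (k + 1) X ⊓ LinearMap.ker (homogeneousComponent (k + 1)) = PkX k X := by
  ext p
  simp only [Submodule.mem_inf, LinearMap.mem_ker, mem_PkX]
  constructor
  · rintro ⟨⟨hdeg, hX⟩, htop⟩
    exact ⟨(totalDegree_le_iff_homogeneousComponent_eq_zero hdeg).mpr htop, hX⟩
  · rintro ⟨hdeg, hX⟩
    exact ⟨⟨by omega, hX⟩,
      (totalDegree_le_iff_homogeneousComponent_eq_zero (by omega)).mp hdeg⟩

def evalOn (X : Finset Pt) : MvPolynomial (Fin 2) ℝ →ₗ[ℝ] (X → ℝ) :=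
  LinearMap.pi fun A => (aeval (A : Pt)).toLinearMap

lemma PkX_eq_inf_ker_evalOn (k : ℕ) (X : Finset Pt) :
    PkX k X = restrictTotalDegree (Fin 2) ℝ k ⊓ LinearMap.ker (evalOn X) := by
  rw [PkX, evalOn, LinearMap.ker_pi, iInf_subtype']

lemma map_evalOn_eq_top {n : ℕ} {X : Finset Pt} (hind : NIndep n X) :
    (restrictTotalDegree (Fin 2) ℝ n).map (evalOn X) = ⊤ := by
  rw [eq_top_iff, ← (Pi.basisFun ℝ X).span_eq, Submodule.span_le]
  rintro _ ⟨A, rfl⟩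
  obtain ⟨p, hdeg, hA, hB⟩ := hind A A.2
  refine ⟨p, (mem_restrictTotalDegree _ _ _).mpr hdeg, funext fun B => ?_⟩
  by_cases hBA : B = A
  · subst hBA; simp [evalOn, hA]
  · simp [evalOn, hB B B.2 (Subtype.coe_ne_coe.mpr hBA), hBA]

lemma finrank_PkX_add_card {n : ℕ} {X : Finset Pt} (hind : NIndep n X) :
    Module.finrank ℝ (PkX n X) + X.card = Nn n := by
  have := finrank_map_add_finrank_inf_ker (evalOn X) (restrictTotalDegree (Fin 2) ℝ n)
  rw [map_evalOn_eq_top hind, finrank_top, Module.finrank_fintype_fun_eq_card, Fintype.card_coe,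
    ← PkX_eq_inf_ker_evalOn, finrank_restrictTotalDegree_fin_two] at this
  omega

def topForms (k : ℕ) (X : Finset Pt) : Submodule ℝ (MvPolynomial (Fin 2) ℝ) :=
  (PkX k X).map (homogeneousComponent k)

instance (k : ℕ) (X : Finset Pt) : FiniteDimensional ℝ (topForms k X) :=
  Module.Finite.map _ _

lemma finrank_topForms_add_finrank_PkX (k : ℕ) (X : Finset Pt) :
    Module.finrank ℝ (topForms (k + 1) X) + Module.finrank ℝ (PkX k X) =
      Module.finrank ℝ (PkX (k + 1) X) := by
  rw [← PkX_succ_inf_ker_homogeneousComponent]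
  exact finrank_map_add_finrank_inf_ker _ _

lemma mul_X_mem_topForms {k : ℕ} {X : Finset Pt} {w : MvPolynomial (Fin 2) ℝ}
    (hw : w ∈ topForms k X) (i : Fin 2) : w * MvPolynomial.X i ∈ topForms (k + 1) X := by
  obtain ⟨p, hp, rfl⟩ := hw
  exact ⟨_, mul_X_mem_PkX hp i, homogeneousComponent_succ_mul_X k p i⟩

/-- `x₀ • W_k ⊆ W_{k+1}` has the dimension of `W_k`, and `x₁ w ∉ x₀ • W_k` when
`w ∈ W_k \ 0` has minimal degree in `x₀`. -/
lemma finrank_topForms_lt_succ {k : ℕ} {X : Finset Pt}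
    (hpos : 0 < Module.finrank ℝ (topForms k X)) :
    Module.finrank ℝ (topForms k X) < Module.finrank ℝ (topForms (k + 1) X) := by
  obtain ⟨w₀, hw₀⟩ := Submodule.exists_mem_ne_zero_of_ne_bot
    (Submodule.one_le_finrank_iff.mp hpos)
  obtain ⟨w, ⟨hw, hw0⟩, hmin⟩ := (measure (degreeOf 0)).wf.has_min
    {v | v ∈ topForms k X ∧ v ≠ 0} ⟨w₀, hw₀⟩
  let mulX₀ := LinearMap.mulRight ℝ (MvPolynomial.X 0 : MvPolynomial (Fin 2) ℝ)
  have hinj : Function.Injective mulX₀ := mul_left_injective₀ (X_ne_zero 0)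
  have hle : (topForms k X).map mulX₀ ≤ topForms (k + 1) X := by
    rintro _ ⟨v, hv, rfl⟩
    exact mul_X_mem_topForms hv 0
  have hnot : w * MvPolynomial.X 1 ∉ (topForms k X).map mulX₀ := by
    rintro ⟨v, hv, hvw⟩
    have hv0 : v ≠ 0 := by
      rintro rfl
      exact hw0 ((mul_eq_zero.mp (by simpa [mulX₀] using hvw.symm)).resolve_right (X_ne_zero 1))
    have hdeg : degreeOf 0 v + 1 = degreeOf 0 w := by
      rw [← (degreeOf_mul_X_eq_degreeOf_add_one_iff 0 v).mpr hv0,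
        ← degreeOf_mul_X_of_ne w (by decide : (0 : Fin 2) ≠ 1)]
      exact congrArg (degreeOf 0) hvw
    exact hmin v ⟨hv, hv0⟩ (show degreeOf 0 v < degreeOf 0 w by omega)
  calc Module.finrank ℝ (topForms k X)
      = Module.finrank ℝ ((topForms k X).map mulX₀) :=
        (Submodule.equivMapOfInjective _ hinj _).finrank_eq
    _ < Module.finrank ℝ (topForms (k + 1) X) :=
        Submodule.finrank_lt_finrank_of_lt
          (lt_of_le_of_ne hle fun h => hnot (h ▸ mul_X_mem_topForms hw 1))

lemma finrank_topForms_add_le {k : ℕ} {X : Finset Pt}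
    (hpos : 0 < Module.finrank ℝ (topForms k X)) (i : ℕ) :
    Module.finrank ℝ (topForms k X) + i ≤ Module.finrank ℝ (topForms (k + i) X) := by
  induction i with
  | zero => rfl
  | succ i ih => exact (Nat.succ_le_succ ih).trans (finrank_topForms_lt_succ (by omega))

lemma two_mul_finrank_PkX_add_le {k : ℕ} {X : Finset Pt}
    (hpos : 0 < Module.finrank ℝ (topForms k X)) (i : ℕ) :
    2 * Module.finrank ℝ (PkX k X) + i * (2 * Module.finrank ℝ (topForms k X) + i + 1) ≤
      2 * Module.finrank ℝ (PkX (k + i) X) := by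
  induction i with
  | zero => simp
  | succ i ih =>
    have hstep := finrank_topForms_add_finrank_PkX (k + i) X
    have hgrowth : Module.finrank ℝ (topForms k X) + (i + 1) ≤
        Module.finrank ℝ (topForms (k + i + 1) X) :=
      finrank_topForms_add_le hpos (i + 1)
    show _ ≤ 2 * Module.finrank ℝ (PkX (k + i + 1) X)
    nlinarith

/-- **Proposition 5 (existence of three curves of degree `k-1`).** -/
theorem stmt2 (n k : ℕ) (hk4 : 4 ≤ k) (hkn : k + 1 ≤ n) (X : Finset Pt)
    (hind : NIndep n X) (hcard : X.card = dnk n (k - 3) + 3)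
    (hdim : 7 ≤ Module.finrank ℝ (PkX k X)) :
    3 ≤ Module.finrank ℝ (PkX (k - 1) X) := by
  by_contra! hlt
  obtain ⟨j, rfl⟩ : ∃ j, k = j + 1 := ⟨k - 1, by omega⟩
  obtain ⟨e, rfl⟩ : ∃ e, n = j + 1 + e := ⟨n - (j + 1), by omega⟩
  rw [Nat.add_sub_cancel] at hlt
  have htop := finrank_topForms_add_finrank_PkX j X
  have hgrowth := two_mul_finrank_PkX_add_le (k := j + 1) (X := X) (by omega) e
  have hcount := finrank_PkX_add_card hind
  rw [dnk, show j + 1 + e - (j + 1 - 3) = e + 3 by omega] at hcard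
  have hmono := Nn_mono (show e + 3 ≤ j + 1 + e by omega)
  have hDn : Module.finrank ℝ (PkX (j + 1 + e) X) + 3 = Nn (e + 3) := by omega
  have hNn := two_mul_Nn (e + 3)
  have hw : 5 ≤ Module.finrank ℝ (topForms (j + 1) X) := by omega
  nlinarith [Nat.mul_le_mul_left e hw]
end
end

section
/- Let p₁, p₂ be bivariate real polynomials with p₁ nonzero and squarefree and deg p₂ ≤ deg p₁ + 1 (total degrees). Then there exists ε₀ > 0 such that for every real ε with |ε| < ε₀ the polynomial p₁ + ε·p₂ is squarefree. -/
/-!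
If `p + c • q` is not squarefree, some irreducible `r` has `r * r ∣ p + c • q`; then `r` divides
`f = p + c • q` and its partial derivatives, hence the Wronskians `f ∂ᵢq - ∂ᵢf q`, which do not
depend on `c`. If all of them vanish, `q` is a constant multiple of `p`, and `p + c • q` is a unit
multiple of `p` for all but at most one `c`. Otherwise some Wronskian is nonzero and has finitely
many irreducible factors up to associates, and each `r` serves at most one `c`, since otherwise
`r * r` divides `q` and then `p`. So only finitely many `c` are bad, and `c = 0` is not among them.
-/
open MvPolynomial

noncomputable section

open UniqueFactorizationMonoid

namespace Derivation

variable {R A : Type*} [CommRing R] [CommRing A] [Algebra R A]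

def wronskian (D : Derivation R A A) (a b : A) : A := a * D b - D a * b

variable (D : Derivation R A A)

theorem wronskian_add_smul_left (a b : A) (c : R) :
    D.wronskian (a + c • b) b = D.wronskian a b := by
  rw [wronskian, wronskian, map_add, D.map_smul, Algebra.smul_def, Algebra.smul_def]
  ring

theorem wronskian_mul_mul (g a b : A) :
    D.wronskian (g * a) (g * b) = g * g * D.wronskian a b := by
  simp only [wronskian, leibniz, smul_eq_mul]
  ring

theorem dvd_apply_of_mul_self_dvd {q a : A} (h : q * q ∣ a) : q ∣ D a := by
  obtain ⟨r, rfl⟩ := h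
  simp only [leibniz, smul_eq_mul]
  exact dvd_add (dvd_mul_of_dvd_left (dvd_mul_right q q) _)
    (dvd_mul_of_dvd_right (dvd_add (dvd_mul_right q _) (dvd_mul_right q _)) _)

theorem dvd_wronskian_of_mul_self_dvd {q a : A} (b : A) (h : q * q ∣ a) :
    q ∣ D.wronskian a b :=
  dvd_sub (dvd_mul_of_dvd_left (dvd_of_mul_right_dvd h) _)
    (dvd_mul_of_dvd_left (D.dvd_apply_of_mul_self_dvd h) _)

end Derivation

section Squarefree

variable {K A : Type*} [Field K] [CommRing A] [Algebra K A]

theorem Squarefree.smul {p : A} (hp : Squarefree p) {c : K} (hc : c ≠ 0) :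
    Squarefree (c • p) := by
  rw [Algebra.smul_def]
  have hc' : IsUnit (algebraMap K A c) := (IsUnit.mk0 c hc).map (algebraMap K A)
  exact (associated_unit_mul_left p _ hc').symm.squarefree_iff.mp hp

theorem Squarefree.subsingleton_setOf_mul_self_dvd_add_smul {p : A} (hp : Squarefree p)
    {r : A} (hr : ¬IsUnit r) (q : A) : {c : K | r * r ∣ p + c • q}.Subsingleton := by
  intro c₁ h₁ c₂ h₂
  by_contra hne
  have hq : r * r ∣ q := by
    have h : r * r ∣ (c₁ - c₂) • q := by
      rw [sub_smul, ← add_sub_add_left_eq_sub _ _ p]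
      exact dvd_sub h₁ h₂
    simpa [smul_smul, inv_mul_cancel₀ (sub_ne_zero.mpr hne)] using
      dvd_smul_of_dvd (c₁ - c₂)⁻¹ h
  exact hr (hp r (by simpa using dvd_sub h₁ (dvd_smul_of_dvd c₁ hq)))

theorem Squarefree.subsingleton_setOf_not_squarefree_add_smul_smul {p : A} (hp : Squarefree p)
    (d : K) : {c : K | ¬Squarefree (p + c • d • p)}.Subsingleton := by
  have hsub : {c : K | ¬Squarefree (p + c • d • p)} ⊆ {c | 1 + c * d = 0} := by
    intro c hc
    by_contra h
    refine hc ?_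
    rw [smul_smul, ← one_smul K p, smul_smul, ← add_smul, mul_one]
    exact hp.smul h
  refine Set.Subsingleton.anti ?_ hsub
  rintro c₁ (h₁ : 1 + c₁ * d = 0) c₂ (h₂ : 1 + c₂ * d = 0)
  have hd : d ≠ 0 := by rintro rfl; simp at h₁
  exact mul_right_cancel₀ hd (by linear_combination h₁ - h₂ : c₁ * d = c₂ * d)

end Squarefree

namespace MvPolynomial

variable {σ R : Type*}

theorem totalDegree_pderiv_lt [CommSemiring R] {p : MvPolynomial σ R} {i : σ}
    (h : pderiv i p ≠ 0) : (pderiv i p).totalDegree < p.totalDegree := by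
  obtain ⟨m, hm, hdeg⟩ :
      ∃ m ∈ (pderiv i p).support, (pderiv i p).totalDegree = m.degree :=
    Finset.exists_mem_eq_sup _ (support_nonempty.mpr h) _
  rw [mem_support_iff, coeff_pderiv] at hm
  have hle : (m + Finsupp.single i 1).degree ≤ p.totalDegree :=
    le_totalDegree (mem_support_iff.mpr (left_ne_zero_of_mul hm))
  rw [map_add, Finsupp.degree_single] at hle
  omega

theorem pderiv_eq_zero_of_dvd [CommRing R] [IsDomain R] {p : MvPolynomial σ R} {i : σ}
    (h : p ∣ pderiv i p) : pderiv i p = 0 := by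
  by_contra hne
  exact (totalDegree_pderiv_lt hne).not_ge (totalDegree_le_of_dvd_of_isDomain h hne)

theorem eq_C_of_forall_pderiv_eq_zero [CommRing R] [IsDomain R] [CharZero R]
    {p : MvPolynomial σ R} (h : ∀ i, pderiv i p = 0) : p = C (p.coeff 0) := by
  classical
  ext m
  rw [coeff_C]
  split_ifs with hm
  · rw [hm]
  obtain ⟨i, hi⟩ : ∃ i, m i ≠ 0 := by
    by_contra! hzero
    exact hm (Finsupp.ext hzero).symm
  have hcoeff := coeff_pderiv (i := i) p (m - Finsupp.single i 1)
  have hle : Finsupp.single i 1 ≤ m := Finsupp.single_le_iff.mpr (Nat.one_le_iff_ne_zero.mpr hi)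
  rw [h i, coeff_zero, tsub_add_cancel_of_le hle] at hcoeff
  exact (mul_eq_zero.mp hcoeff.symm).resolve_right (Nat.cast_add_one_ne_zero _)

theorem exists_eq_smul_of_forall_wronskian_eq_zero {K : Type*} [Field K] [CharZero K]
    {p q : MvPolynomial σ K} (hp : p ≠ 0) (h : ∀ i, (pderiv i).wronskian p q = 0) :
    ∃ c : K, q = c • p := by
  obtain ⟨a, b, g, hab, rfl, rfl⟩ := exists_reduced_factors p hp q
  have hg : g ≠ 0 := left_ne_zero_of_mul hp
  have ha : a ≠ 0 := right_ne_zero_of_mul hp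
  have hw : ∀ i, a * pderiv i b = pderiv i a * b := fun i => by
    have hi := h i
    rw [Derivation.wronskian_mul_mul, Derivation.wronskian] at hi
    exact sub_eq_zero.mp ((mul_eq_zero.mp hi).resolve_left (mul_ne_zero hg hg))
  have hda : ∀ i, pderiv i a = 0 := fun i =>
    pderiv_eq_zero_of_dvd (hab.dvd_of_dvd_mul_right ⟨pderiv i b, (hw i).symm⟩)
  have hdb : ∀ i, pderiv i b = 0 := fun i => by simpa [hda i, ha] using hw i
  obtain ⟨α, rfl⟩ : ∃ α, a = C α := ⟨_, eq_C_of_forall_pderiv_eq_zero hda⟩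
  obtain ⟨β, rfl⟩ : ∃ β, b = C β := ⟨_, eq_C_of_forall_pderiv_eq_zero hdb⟩
  have hα : α ≠ 0 := by rintro rfl; exact ha C_0
  exact ⟨β / α, by rw [← mul_smul_comm, smul_eq_C_mul, ← C_mul, div_mul_cancel₀ _ hα]⟩

end MvPolynomial

theorem Squarefree.finite_setOf_not_squarefree_add_smul {σ K : Type*} [Field K] [CharZero K]
    {p : MvPolynomial σ K} (hp : Squarefree p) (q : MvPolynomial σ K) :
    {c : K | ¬Squarefree (p + c • q)}.Finite := by
  by_cases hprop : ∃ d : K, q = d • p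
  · obtain ⟨d, rfl⟩ := hprop
    exact (hp.subsingleton_setOf_not_squarefree_add_smul_smul d).finite
  obtain ⟨i, hW⟩ : ∃ i, (pderiv i).wronskian p q ≠ 0 := by
    by_contra! h
    exact hprop (exists_eq_smul_of_forall_wronskian_eq_zero hp.ne_zero h)
  set W := (pderiv i).wronskian p q with hW_def
  have hfin : (⋃ r ∈ {r | r ∈ factors W}, {c : K | r * r ∣ p + c • q}).Finite :=
    (Multiset.finite_toSet _).biUnion fun r hr =>
      (hp.subsingleton_setOf_mul_self_dvd_add_smul (irreducible_of_factor r hr).not_isUnit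
        q).finite
  refine hfin.subset ?_
  intro c (hc : ¬Squarefree (p + c • q))
  rw [squarefree_iff_irreducible_sq_not_dvd_of_exists_irreducible ⟨X i, X_prime.irreducible⟩]
    at hc
  push Not at hc
  obtain ⟨s, hs, hss⟩ := hc
  have hsW : s ∣ W := by
    rw [hW_def, ← (pderiv i).wronskian_add_smul_left p q c]
    exact (pderiv i).dvd_wronskian_of_mul_self_dvd q hss
  obtain ⟨r, hr, hsr⟩ := exists_mem_factors_of_dvd hW hs hsW
  exact Set.mem_biUnion hr ((hsr.mul_mul hsr).dvd_iff_dvd_left.mp hss)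

theorem stmt5_general (p₁ p₂ : MvPolynomial (Fin 2) ℝ) (hsq : Squarefree p₁) :
    ∃ ε₀ : ℝ, 0 < ε₀ ∧ ∀ ε : ℝ, |ε| < ε₀ → Squarefree (p₁ + ε • p₂) := by
  have hgood : {ε : ℝ | ¬Squarefree (p₁ + ε • p₂)}ᶜ ∈ nhds 0 :=
    (hsq.finite_setOf_not_squarefree_add_smul p₂).isClosed.isOpen_compl.mem_nhds
      (by simpa using hsq)
  obtain ⟨ε₀, hε₀, hball⟩ := Metric.mem_nhds_iff.mp hgood
  refine ⟨ε₀, hε₀, fun ε hε => ?_⟩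
  simpa using hball (by simpa using hε)

/-- **Proposition 10.** If `p₁` is nonzero and squarefree and `deg p₂ ≤ deg p₁ + 1`, then for
sufficiently small `ε` the polynomial `p₁ + ε p₂` is squarefree. -/
theorem stmt5 (p₁ p₂ : MvPolynomial (Fin 2) ℝ) (hp₁ : p₁ ≠ 0) (hsq : Squarefree p₁)
    (hdeg : p₂.totalDegree ≤ p₁.totalDegree + 1) :
    ∃ ε₀ : ℝ, 0 < ε₀ ∧ ∀ ε : ℝ, |ε| < ε₀ → Squarefree (p₁ + ε • p₂) :=
  stmt5_general p₁ p₂ hsq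
end
end

section
/- Let p₁, p₂ be bivariate real polynomials with p₁ irreducible and deg p₂ ≤ deg p₁ (total degrees). Then there exists ε₀ > 0 such that for every real ε with |ε| < ε₀ the polynomial p₁ + ε·p₂ is irreducible. -/
open MvPolynomial

noncomputable section

/-
The coefficient vectors of products `q * r` with `deg q, deg r ≤ N` form a closed subset of a
finite-dimensional space: multiplication is a bilinear map without zero divisors, so
`‖q * r‖ ≥ δ ‖q‖ ‖r‖` for some `δ > 0`, and after rescaling every bounded family of products comes
from a compact family of factors. If `deg p₁ = N + 1` and `p₁` is irreducible, then `p₁` is not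
such a product, hence neither is `p₁ + ε p₂` for small `ε`. A polynomial of degree at most `N + 1`
that is not such a product is irreducible, since both factors of a nontrivial factorisation would
have positive degree.
-/

section Bilinear

variable {E F G : Type*} [NormedAddCommGroup E] [NormedSpace ℝ E] [FiniteDimensional ℝ E]
  [NormedAddCommGroup F] [NormedSpace ℝ F] [FiniteDimensional ℝ F]
  [NormedAddCommGroup G] [NormedSpace ℝ G]

theorem ContinuousLinearMap.exists_pos_mul_norm_mul_norm_le (B : E →L[ℝ] F →L[ℝ] G)
    (hB : ∀ x y, B x y = 0 → x = 0 ∨ y = 0) :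
    ∃ δ > 0, ∀ x y, δ * (‖x‖ * ‖y‖) ≤ ‖B x y‖ := by
  have hcont : Continuous fun z : E × F => ‖B z.1 z.2‖ := B.continuous₂.norm
  obtain ⟨δ, hδ, hmin⟩ := ((isCompact_sphere (0 : E) 1).prod (isCompact_sphere (0 : F) 1)
    ).exists_forall_le' hcont.continuousOn (a := 0) fun z hz => by
      rw [Set.mem_prod, mem_sphere_zero_iff_norm, mem_sphere_zero_iff_norm] at hz
      refine norm_pos_iff.mpr fun h => ?_
      rcases hB _ _ h with h | h <;> simp [h] at hz
  refine ⟨δ, hδ, fun x y => ?_⟩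
  rcases eq_or_ne x 0 with rfl | hx
  · simp
  rcases eq_or_ne y 0 with rfl | hy
  · simp
  have hunit := hmin (‖x‖⁻¹ • x, ‖y‖⁻¹ • y) ⟨by simp [norm_smul, hx], by simp [norm_smul, hy]⟩
  have hscale : B x y = (‖x‖ * ‖y‖) • B (‖x‖⁻¹ • x) (‖y‖⁻¹ • y) := by
    have : ‖x‖ * ‖y‖ * (‖y‖⁻¹ * ‖x‖⁻¹) = 1 := by field_simp
    simp [smul_smul, this]
  rw [hscale, norm_smul, Real.norm_of_nonneg (by positivity), mul_comm]
  exact mul_le_mul_of_nonneg_left hunit (by positivity)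

theorem ContinuousLinearMap.isClosed_range₂ (B : E →L[ℝ] F →L[ℝ] G)
    (hB : ∀ x y, B x y = 0 → x = 0 ∨ y = 0) :
    IsClosed (Set.range fun z : E × F => B z.1 z.2) := by
  obtain ⟨δ, hδ, hlow⟩ := B.exists_pos_mul_norm_mul_norm_le hB
  refine isClosed_of_closure_subset fun w hw => ?_
  obtain ⟨ρ, hwρ, hρ⟩ : ∃ ρ, ‖w‖ < ρ ∧ 0 < ρ := ⟨‖w‖ + 1, by linarith, by positivity⟩
  set K := (fun z : E × F => B z.1 z.2) '' (Metric.closedBall 0 1 ×ˢ Metric.closedBall 0 (ρ / δ))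
  have hK : IsCompact K :=
    ((isCompact_closedBall _ _).prod (isCompact_closedBall _ _)).image B.continuous₂
  have hsub : Metric.ball 0 ρ ∩ Set.range (fun z : E × F => B z.1 z.2) ⊆ K := by
    rintro _ ⟨hBρ, ⟨x, y⟩, rfl⟩
    rw [mem_ball_zero_iff] at hBρ
    rcases eq_or_ne x 0 with rfl | hx
    · exact ⟨0, ⟨by simp, Metric.mem_closedBall_self (by positivity)⟩, by simp⟩
    refine ⟨(‖x‖⁻¹ • x, ‖x‖ • y), ⟨by simp [norm_smul, hx], ?_⟩, by simp [smul_smul, hx]⟩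
    rw [Metric.mem_closedBall, dist_zero_right, norm_smul, norm_norm, le_div_iff₀ hδ]
    nlinarith [hlow x y]
  have hwK : w ∈ closure K :=
    closure_mono hsub (Metric.isOpen_ball.inter_closure ⟨mem_ball_zero_iff.mpr hwρ, hw⟩)
  obtain ⟨z, -, hz⟩ := hK.isClosed.closure_subset hwK
  exact ⟨z, hz⟩

end Bilinear

namespace MvPolynomial

section CoeffVectors

variable {σ R : Type*} [CommSemiring R]

def coeffsOn (s : Finset (σ →₀ ℕ)) : MvPolynomial σ R →ₗ[R] s → R :=
  LinearMap.pi fun d => lcoeff R d.1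

def ofCoeffs (s : Finset (σ →₀ ℕ)) : (s → R) →ₗ[R] MvPolynomial σ R :=
  ∑ d : s, monomial d.1 ∘ₗ LinearMap.proj d

@[simp]
theorem coeffsOn_apply (s : Finset (σ →₀ ℕ)) (p : MvPolynomial σ R) (d : s) :
    coeffsOn s p d = coeff d.1 p :=
  rfl

theorem ofCoeffs_apply (s : Finset (σ →₀ ℕ)) (a : s → R) :
    ofCoeffs s a = ∑ d : s, monomial d.1 (a d) := by
  simp [ofCoeffs, LinearMap.sum_apply]

theorem coeff_ofCoeffs_of_mem {s : Finset (σ →₀ ℕ)} (a : s → R) {e : σ →₀ ℕ} (h : e ∈ s) :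
    coeff e (ofCoeffs s a) = a ⟨e, h⟩ := by
  classical
  rw [ofCoeffs_apply, coeff_sum, Finset.sum_eq_single ⟨e, h⟩, coeff_monomial, if_pos rfl]
  · exact fun d _ hd => by rw [coeff_monomial, if_neg fun he => hd (Subtype.ext he)]
  · simp

theorem coeff_ofCoeffs_of_notMem {s : Finset (σ →₀ ℕ)} (a : s → R) {e : σ →₀ ℕ} (h : e ∉ s) :
    coeff e (ofCoeffs s a) = 0 := by
  classical
  rw [ofCoeffs_apply, coeff_sum]
  exact Finset.sum_eq_zero fun d _ => by
    rw [coeff_monomial, if_neg fun (he : d.1 = e) => h (he ▸ d.2)]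

theorem support_ofCoeffs_subset (s : Finset (σ →₀ ℕ)) (a : s → R) :
    (ofCoeffs s a).support ⊆ s := fun _ he =>
  not_not.mp fun h => mem_support_iff.mp he (coeff_ofCoeffs_of_notMem a h)

@[simp]
theorem coeffsOn_ofCoeffs (s : Finset (σ →₀ ℕ)) (a : s → R) : coeffsOn s (ofCoeffs s a) = a := by
  ext d
  simp [coeff_ofCoeffs_of_mem a d.2]

theorem ofCoeffs_coeffsOn {s : Finset (σ →₀ ℕ)} {p : MvPolynomial σ R} (h : p.support ⊆ s) :
    ofCoeffs s (coeffsOn s p) = p := by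
  ext e
  by_cases he : e ∈ s
  · rw [coeff_ofCoeffs_of_mem _ he, coeffsOn_apply]
  · rw [coeff_ofCoeffs_of_notMem _ he, notMem_support_iff.mp fun hp => he (h hp)]

end CoeffVectors

section Degree

variable {σ : Type*}

theorem isUnit_of_totalDegree_eq_zero {K : Type*} [Field K] {p : MvPolynomial σ K} (hp : p ≠ 0)
    (h : p.totalDegree = 0) : IsUnit p := by
  rw [totalDegree_eq_zero_iff_eq_C] at h
  rw [h] at hp ⊢
  exact (isUnit_iff_ne_zero.mpr fun h0 => hp (by rw [h0, C_0])).map C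

theorem _root_.Irreducible.totalDegree_pos {K : Type*} [Field K] {p : MvPolynomial σ K}
    (hp : Irreducible p) : 0 < p.totalDegree :=
  Nat.pos_of_ne_zero fun h => hp.not_isUnit (isUnit_of_totalDegree_eq_zero hp.ne_zero h)

theorem _root_.Irreducible.totalDegree_eq_or_totalDegree_eq_of_mul_eq {R : Type*} [CommRing R]
    [IsDomain R] {p q r : MvPolynomial σ R} (hp : Irreducible p) (h : q * r = p) :
    q.totalDegree = p.totalDegree ∨ r.totalDegree = p.totalDegree := by
  have hq : q ≠ 0 := by rintro rfl; exact hp.ne_zero (by rw [← h, zero_mul])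
  have hr : r ≠ 0 := by rintro rfl; exact hp.ne_zero (by rw [← h, mul_zero])
  have hdeg := totalDegree_mul_of_isDomain hq hr
  rw [h] at hdeg
  rcases hp.isUnit_or_isUnit h.symm with hu | hu <;>
    have := (isUnit_iff_totalDegree_of_isReduced.mp hu).2 <;> omega

theorem irreducible_of_forall_mul_ne {K : Type*} [Field K] {p : MvPolynomial σ K} {N : ℕ}
    (hp : p.totalDegree ≤ N + 1)
    (h : ∀ q r : MvPolynomial σ K, q.totalDegree ≤ N → r.totalDegree ≤ N → q * r ≠ p) :
    Irreducible p := by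
  refine ⟨fun hu => h p 1 ?_ (by simp) (mul_one p), fun q r hqr => ?_⟩
  · simp [(isUnit_iff_totalDegree_of_isReduced.mp hu).2]
  by_contra! hnu
  have hq : q ≠ 0 := by rintro rfl; exact h 0 0 (by simp) (by simp) (by simp [hqr])
  have hr : r ≠ 0 := by rintro rfl; exact h 0 0 (by simp) (by simp) (by simp [hqr])
  have hq1 : q.totalDegree ≠ 0 := fun h0 => hnu.1 (isUnit_of_totalDegree_eq_zero hq h0)
  have hr1 : r.totalDegree ≠ 0 := fun h0 => hnu.2 (isUnit_of_totalDegree_eq_zero hr h0)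
  have hdeg := totalDegree_mul_of_isDomain hq hr
  rw [← hqr] at hdeg
  exact h q r (by omega) (by omega) hqr.symm

end Degree

section ProductCoeffs

variable (σ : Type*) [Finite σ]

def degLE (n : ℕ) : Finset (σ →₀ ℕ) :=
  (Finsupp.finite_of_degree_le n).toFinset

variable {σ}

theorem mem_degLE {n : ℕ} {d : σ →₀ ℕ} : d ∈ degLE σ n ↔ d.degree ≤ n :=
  Set.Finite.mem_toFinset _

theorem support_subset_degLE {R : Type*} [CommSemiring R] {p : MvPolynomial σ R} {n : ℕ}
    (h : p.totalDegree ≤ n) : p.support ⊆ degLE σ n :=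
  fun _ hd => mem_degLE.mpr ((le_totalDegree hd).trans h)

theorem totalDegree_ofCoeffs_degLE_le {R : Type*} [CommSemiring R] (n : ℕ) (a : degLE σ n → R) :
    (ofCoeffs (degLE σ n) a).totalDegree ≤ n :=
  Finset.sup_le fun _ hd => mem_degLE.mp (support_ofCoeffs_subset _ a hd)

variable (σ)

def productCoeffs (N M : ℕ) : Set (degLE σ M → ℝ) :=
  Set.image2 (fun q r => coeffsOn (degLE σ M) (q * r))
    {q : MvPolynomial σ ℝ | q.totalDegree ≤ N} {r | r.totalDegree ≤ N}

variable {σ}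

theorem exists_mul_eq_of_coeffsOn_mem_productCoeffs {N M : ℕ} (hNM : 2 * N ≤ M)
    {p : MvPolynomial σ ℝ} (hp : p.totalDegree ≤ M)
    (h : coeffsOn (degLE σ M) p ∈ productCoeffs σ N M) :
    ∃ q r : MvPolynomial σ ℝ, q.totalDegree ≤ N ∧ r.totalDegree ≤ N ∧ q * r = p := by
  obtain ⟨q, hq : q.totalDegree ≤ N, r, hr : r.totalDegree ≤ N,
    hqr : coeffsOn _ (q * r) = coeffsOn _ p⟩ := h
  have hdeg : (q * r).totalDegree ≤ M := (totalDegree_mul q r).trans (by omega)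
  refine ⟨q, r, hq, hr, ?_⟩
  rw [← ofCoeffs_coeffsOn (support_subset_degLE hdeg), hqr,
    ofCoeffs_coeffsOn (support_subset_degLE hp)]

theorem isClosed_productCoeffs {N M : ℕ} (hNM : 2 * N ≤ M) : IsClosed (productCoeffs σ N M) := by
  let B : (degLE σ N → ℝ) →ₗ[ℝ] (degLE σ N → ℝ) →ₗ[ℝ] degLE σ M → ℝ :=
    ((LinearMap.mul ℝ _).compl₁₂ (ofCoeffs _) (ofCoeffs _)).compr₂ (coeffsOn _)
  have hrange : productCoeffs σ N M =
      Set.range fun z : (degLE σ N → ℝ) × (degLE σ N → ℝ) => B.toContinuousBilinearMap z.1 z.2 := by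
    ext c
    constructor
    · rintro ⟨q, hq, r, hr, rfl⟩
      refine ⟨(coeffsOn _ q, coeffsOn _ r), ?_⟩
      simp [B, ofCoeffs_coeffsOn (support_subset_degLE hq),
        ofCoeffs_coeffsOn (support_subset_degLE hr)]
    · rintro ⟨⟨a, b⟩, rfl⟩
      exact ⟨_, totalDegree_ofCoeffs_degLE_le N a, _, totalDegree_ofCoeffs_degLE_le N b, rfl⟩
  rw [hrange]
  refine B.toContinuousBilinearMap.isClosed_range₂ fun a b hab => ?_
  have hdeg : (ofCoeffs (degLE σ N) a * ofCoeffs _ b).totalDegree ≤ M :=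
    (totalDegree_mul _ _).trans (by
      have := totalDegree_ofCoeffs_degLE_le N a
      have := totalDegree_ofCoeffs_degLE_le N b
      omega)
  have hmul : ofCoeffs (degLE σ N) a * ofCoeffs _ b = 0 := by
    rw [← ofCoeffs_coeffsOn (support_subset_degLE hdeg)]
    exact (congrArg (ofCoeffs _) hab).trans (map_zero _)
  rcases mul_eq_zero.mp hmul with h | h
  · exact Or.inl (by rw [← coeffsOn_ofCoeffs _ a, h, map_zero])
  · exact Or.inr (by rw [← coeffsOn_ofCoeffs _ b, h, map_zero])

end ProductCoeffs

end MvPolynomial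

/-- **Remark 1.** If `p₁` is irreducible and `deg p₂ ≤ deg p₁`, then for sufficiently small `ε`
the polynomial `p₁ + ε p₂` is irreducible. -/
theorem stmt6 (p₁ p₂ : MvPolynomial (Fin 2) ℝ) (hirr : Irreducible p₁)
    (hdeg : p₂.totalDegree ≤ p₁.totalDegree) :
    ∃ ε₀ : ℝ, 0 < ε₀ ∧ ∀ ε : ℝ, |ε| < ε₀ → Irreducible (p₁ + ε • p₂) := by
  obtain ⟨N, hN⟩ := Nat.exists_eq_add_one.mpr hirr.totalDegree_pos
  set M := 2 * N + 1
  have hp₁ : coeffsOn (degLE (Fin 2) M) p₁ ∉ productCoeffs (Fin 2) N M := fun hmem => by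
    obtain ⟨q, r, hq, hr, hqr⟩ :=
      exists_mul_eq_of_coeffsOn_mem_productCoeffs (by omega) (by omega) hmem
    rcases hirr.totalDegree_eq_or_totalDegree_eq_of_mul_eq hqr with h | h <;> omega
  have hcont : Continuous fun ε : ℝ => coeffsOn (degLE (Fin 2) M) (p₁ + ε • p₂) := by
    simp only [map_add, map_smul]
    fun_prop
  have hnear : ∀ᶠ ε : ℝ in nhds 0,
      coeffsOn (degLE (Fin 2) M) (p₁ + ε • p₂) ∉ productCoeffs (Fin 2) N M :=
    (hcont.tendsto' 0 _ (by simp)).eventually_mem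
      ((isClosed_productCoeffs (by omega)).isOpen_compl.mem_nhds hp₁)
  obtain ⟨ε₀, hε₀, hball⟩ := Metric.eventually_nhds_iff.mp hnear
  refine ⟨ε₀, hε₀, fun ε hε => irreducible_of_forall_mul_ne (N := N) ?_ fun q r hq hr hqr => ?_⟩
  · exact (totalDegree_add _ _).trans
      (max_le hN.le ((totalDegree_smul_le _ _).trans (hdeg.trans hN.le)))
  · exact hball (by simpa using hε) ⟨q, hq, r, hr, congrArg _ hqr⟩
end
end

section
/- Let σ₀, s₁, s₂ be linearly independent bivariate real polynomials, each of exact total degree k and each squarefree. Suppose that every nonzero ℝ-linear combination s of s₁ and s₂ differs from σ₀ by a factor of degree at most two, i.e., there exist polynomials r and γ, γ₀ of total degree ≤ 2 with s = γ·r and σ₀ = γ₀·r. Then there exist a polynomial σ̃₀ of total degree ≤ k−1 and polynomials β₀, β₁, β₂ of total degree ≤ 2 such that σ₀ = σ̃₀·β₀, s₁ = σ̃₀·β₁, and s₂ = σ̃₀·β₂. -/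
open MvPolynomial

noncomputable section

/-!
For infinitely many `t`, the factor `r_t` of the pencil member `s₁ + t s₂` is a divisor of the
fixed nonzero `σ₀`, and a UFD element has only finitely many divisors up to associates. So two
distinct parameters `t ≠ t'` share the factor `r_t`, which then divides
`(t - t') s₂` and hence both `s₁` and `s₂`. Comparing degrees in `σ₀ = γ₀ r_t`, `sᵢ = r_t βᵢ`
gives `deg βᵢ = deg γ₀ ≤ 2`, and `deg r_t < k` because otherwise `σ₀` and `s₁` would both be
scalar multiples of `r_t`.
-/

theorem UniqueFactorizationMonoid.exists_ne_associated_of_forall_dvd {ι α : Type*} [Infinite ι]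
    [CommMonoidWithZero α] [UniqueFactorizationMonoid α] {a : α} (ha : a ≠ 0) (f : ι → α)
    (hf : ∀ i, f i ∣ a) : ∃ i j, i ≠ j ∧ Associated (f i) (f j) := by
  let _ := fintypeSubtypeDvd (Associates.mk a) (Associates.mk_ne_zero.mpr ha)
  obtain ⟨i, j, hij, h⟩ := Finite.exists_ne_map_eq_of_infinite fun i ↦
    (⟨Associates.mk (f i), Associates.mk_dvd_mk.mpr (hf i)⟩ : {x // x ∣ Associates.mk a})
  exact ⟨i, j, hij, Associates.mk_eq_mk_iff_associated.mp (congrArg Subtype.val h)⟩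

theorem exists_dvd_of_forall_dvd_add_smul {K A : Type*} [Field K] [Infinite K] [CommRing A]
    [UniqueFactorizationMonoid A] [Algebra K A] {σ s₁ s₂ : A} (hσ : σ ≠ 0) (r : K → A)
    (hrσ : ∀ t, r t ∣ σ) (hr : ∀ t, r t ∣ s₁ + t • s₂) : ∃ t, r t ∣ s₁ ∧ r t ∣ s₂ := by
  obtain ⟨t, t', htt', hassoc⟩ :=
    UniqueFactorizationMonoid.exists_ne_associated_of_forall_dvd hσ r hrσ
  have hsmul (c : K) {x : A} (hx : r t ∣ x) : r t ∣ c • x := by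
    rw [Algebra.smul_def]
    exact hx.mul_left _
  have hdiff : r t ∣ (t - t') • s₂ := by
    rw [sub_smul, ← add_sub_add_left_eq_sub]
    exact dvd_sub (hr t) (hassoc.dvd.trans (hr t'))
  have hs₂ : r t ∣ s₂ := by
    simpa [sub_ne_zero.mpr htt'] using hsmul (t - t')⁻¹ hdiff
  refine ⟨t, ?_, hs₂⟩
  simpa using dvd_sub (hr t) (hsmul t hs₂)

theorem MvPolynomial.totalDegree_mul_of_mul_ne_zero {σ R : Type*} [CommRing R] [IsDomain R]
    {p q : MvPolynomial σ R} (h : p * q ≠ 0) :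
    (p * q).totalDegree = p.totalDegree + q.totalDegree :=
  totalDegree_mul_of_isDomain (left_ne_zero_of_mul h) (right_ne_zero_of_mul h)

theorem MvPolynomial.totalDegree_lt_of_dvd_of_linearIndependent {σ K : Type*} [Field K]
    {p q r : MvPolynomial σ K} (hpq : LinearIndependent K ![p, q]) (hp : r ∣ p) (hq : r ∣ q)
    (hdeg : p.totalDegree = q.totalDegree) : r.totalDegree < p.totalDegree := by
  obtain ⟨a, rfl⟩ := hp
  obtain ⟨b, rfl⟩ := hq
  have hra : r * a ≠ 0 := by simpa using hpq.ne_zero 0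
  have hrb : r * b ≠ 0 := by simpa using hpq.ne_zero 1
  rw [totalDegree_mul_of_mul_ne_zero hra, totalDegree_mul_of_mul_ne_zero hrb] at hdeg
  rw [totalDegree_mul_of_mul_ne_zero hra]
  by_contra! hle
  obtain ⟨α, rfl⟩ : ∃ α, a = C α := ⟨_, totalDegree_eq_zero_iff_eq_C.mp (by omega)⟩
  obtain ⟨β, rfl⟩ : ∃ β, b = C β := ⟨_, totalDegree_eq_zero_iff_eq_C.mp (by omega)⟩
  obtain ⟨hβ, hα⟩ := LinearIndependent.pair_iff.mp hpq β (-α) (by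
    simp only [smul_eq_C_mul, map_neg]; ring)
  exact hra (by simp [neg_eq_zero.mp hα])

theorem stmt8_general (k : ℕ) (σ₀ s₁ s₂ : MvPolynomial (Fin 2) ℝ)
    (hli : LinearIndependent ℝ ![σ₀, s₁, s₂])
    (hdeg₀ : σ₀.totalDegree = k) (hdeg₁ : s₁.totalDegree = k) (hdeg₂ : s₂.totalDegree = k)
    (hne₀ : σ₀ ≠ 0) (hne₁ : s₁ ≠ 0) (hne₂ : s₂ ≠ 0)
    (hfac : ∀ a b : ℝ, a • s₁ + b • s₂ ≠ 0 →
      ∃ r γ γ₀ : MvPolynomial (Fin 2) ℝ, γ.totalDegree ≤ 2 ∧ γ₀.totalDegree ≤ 2 ∧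
        a • s₁ + b • s₂ = γ * r ∧ σ₀ = γ₀ * r) :
    ∃ σt β₀ β₁ β₂ : MvPolynomial (Fin 2) ℝ, σt.totalDegree ≤ k - 1 ∧
      β₀.totalDegree ≤ 2 ∧ β₁.totalDegree ≤ 2 ∧ β₂.totalDegree ≤ 2 ∧
      σ₀ = σt * β₀ ∧ s₁ = σt * β₁ ∧ s₂ = σt * β₂ := by
  rcases le_or_gt k 2 with hk | hk
  · exact ⟨1, σ₀, s₁, s₂, by simp, hdeg₀ ▸ hk, hdeg₁ ▸ hk, hdeg₂ ▸ hk,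
      (one_mul _).symm, (one_mul _).symm, (one_mul _).symm⟩
  have hli₀₁ : LinearIndependent ℝ ![σ₀, s₁] := by
    convert hli.comp ![0, 1] (by decide) using 1
    ext i; fin_cases i <;> rfl
  have hli₁₂ : LinearIndependent ℝ ![s₁, s₂] := by
    convert hli.comp ![1, 2] (by decide) using 1
    ext i; fin_cases i <;> rfl
  have hpencil (t : ℝ) : (1 : ℝ) • s₁ + t • s₂ ≠ 0 := fun h ↦
    one_ne_zero (LinearIndependent.pair_iff.mp hli₁₂ 1 t h).1
  choose r γ γ₀ _ hγ₀ hr hσ₀ using fun t ↦ hfac 1 t (hpencil t)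
  obtain ⟨t, ⟨β₁, rfl⟩, ⟨β₂, rfl⟩⟩ := exists_dvd_of_forall_dvd_add_smul (s₁ := s₁) hne₀ r
    (fun t ↦ ⟨γ₀ t, by rw [hσ₀ t, mul_comm]⟩) (fun t ↦ ⟨γ t, by rw [mul_comm, ← hr t, one_smul]⟩)
  have hlt : (r t).totalDegree < k := hdeg₀ ▸ totalDegree_lt_of_dvd_of_linearIndependent hli₀₁
    ⟨γ₀ t, by rw [hσ₀ t, mul_comm]⟩ (dvd_mul_right _ _) (hdeg₀.trans hdeg₁.symm)
  rw [hσ₀ t] at hne₀ hdeg₀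
  rw [totalDegree_mul_of_mul_ne_zero hne₀] at hdeg₀
  rw [totalDegree_mul_of_mul_ne_zero hne₁] at hdeg₁
  rw [totalDegree_mul_of_mul_ne_zero hne₂] at hdeg₂
  have hγ₀t := hγ₀ t
  exact ⟨r t, γ₀ t, β₁, β₂, by omega, hγ₀t, by omega, by omega, by rw [hσ₀ t, mul_comm], rfl, rfl⟩

/-- **Lemma 10.** Let `σ₀, s₁, s₂` be linearly independent squarefree polynomials of exact
degree `k`. Suppose every nonzero linear combination of `s₁, s₂` differs from `σ₀` by a factor
of degree at most two. Then `σ₀ = σ̃₀ β₀`, `s₁ = σ̃₀ β₁`, `s₂ = σ̃₀ β₂` with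
`σ̃₀ ∈ Π_{k-1}` and `βᵢ ∈ Π₂`. -/
theorem stmt8 (k : ℕ) (σ₀ s₁ s₂ : MvPolynomial (Fin 2) ℝ)
    (hli : LinearIndependent ℝ ![σ₀, s₁, s₂])
    (hdeg₀ : σ₀.totalDegree = k) (hdeg₁ : s₁.totalDegree = k) (hdeg₂ : s₂.totalDegree = k)
    (hne₀ : σ₀ ≠ 0) (hne₁ : s₁ ≠ 0) (hne₂ : s₂ ≠ 0)
    (hsq₀ : Squarefree σ₀) (hsq₁ : Squarefree s₁) (hsq₂ : Squarefree s₂)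
    (hfac : ∀ a b : ℝ, a • s₁ + b • s₂ ≠ 0 →
      ∃ r γ γ₀ : MvPolynomial (Fin 2) ℝ, γ.totalDegree ≤ 2 ∧ γ₀.totalDegree ≤ 2 ∧
        a • s₁ + b • s₂ = γ * r ∧ σ₀ = γ₀ * r) :
    ∃ σt β₀ β₁ β₂ : MvPolynomial (Fin 2) ℝ, σt.totalDegree ≤ k - 1 ∧
      β₀.totalDegree ≤ 2 ∧ β₁.totalDegree ≤ 2 ∧ β₂.totalDegree ≤ 2 ∧
      σ₀ = σt * β₀ ∧ s₁ = σt * β₁ ∧ s₂ = σt * β₂ :=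
  stmt8_general k σ₀ s₁ s₂ hli hdeg₀ hdeg₁ hdeg₂ hne₀ hne₁ hne₂ hfac
end
end

section
/- Let L be a finite set of lines in ℝ² and let S be a set of 2m points, each lying on some line of L, such that no point of S lies on two distinct lines of L. Then S can be partitioned into m pairs such that the two points of each pair do not lie on the same line of L if and only if every line of L contains at most m points of S. -/
open MvPolynomial

noncomputable section

/-!
Sort `S` by a linear order on the lines, so that the points of each line are consecutive, and
pair the `k`-th point with the `(k + m)`-th (indices mod `2m`). A line carrying at most `m`
points spans fewer than `m` consecutive positions, so no pair lies on one line. Conversely, such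
a pairing maps the points of a line injectively to points off that line, so every line carries at
most half of `S`.
-/

open Finset

theorem finAddFlip_finAddFlip (m : ℕ) (k : Fin (m + m)) : finAddFlip (finAddFlip k) = k := by
  simp [finAddFlip]

section MonotoneColoring

variable {ι : Type*} [PartialOrder ι] [DecidableEq ι] {n m : ℕ}

theorem Fin.val_lt_add_of_monotone_of_apply_eq {g : Fin n → ι} (hg : Monotone g)
    (hfib : ∀ i, #{k | g k = i} ≤ m) {a b : Fin n} (hab : a ≤ b) (h : g a = g b) :
    (b : ℕ) < a + m := by
  have hsub : Icc a b ⊆ ({k | g k = g a} : Finset _) := fun k hk => by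
    rw [mem_Icc] at hk
    simp only [mem_filter, mem_univ, true_and]
    exact le_antisymm (h ▸ hg hk.2) (hg hk.1)
  have := (card_le_card hsub).trans (hfib (g a))
  rw [Fin.card_Icc] at this
  omega

theorem apply_finAddFlip_ne_of_monotone {g : Fin (m + m) → ι} (hg : Monotone g)
    (hfib : ∀ i, #{k | g k = i} ≤ m) (k : Fin (m + m)) : g (finAddFlip k) ≠ g k := by
  obtain ⟨k, hk⟩ := k
  intro heq
  rcases lt_or_ge k m with h | h
  · rw [finAddFlip_apply_mk_left h] at heq
    have := Fin.val_lt_add_of_monotone_of_apply_eq hg hfib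
      (Fin.mk_le_mk.2 (Nat.le_add_left k m)) heq.symm
    dsimp only at this
    omega
  · rw [finAddFlip_apply_mk_right h] at heq
    have := Fin.val_lt_add_of_monotone_of_apply_eq hg hfib
      (Fin.mk_le_mk.2 (Nat.sub_le k m)) heq
    dsimp only at this
    omega

end MonotoneColoring

theorem Fintype.exists_equiv_fin_monotone_comp {α ι : Type*} [Fintype α] [LinearOrder ι]
    (c : α → ι) {n : ℕ} (h : Fintype.card α = n) : ∃ e : Fin n ≃ α, Monotone (c ∘ e) :=
  let e₀ := (Fintype.equivFinOfCardEq h).symm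
  ⟨(Tuple.sort (c ∘ e₀)).trans e₀, Tuple.monotone_sort (c ∘ e₀)⟩

theorem Fintype.exists_involutive_perm_apply_ne_of_card_fiber_le {β ι : Type*} [Fintype β]
    [DecidableEq ι] (c : β → ι) {m : ℕ} (hcard : Fintype.card β = m + m)
    (hfib : ∀ i, #{b | c b = i} ≤ m) :
    ∃ σ : Equiv.Perm β, Function.Involutive σ ∧ ∀ b, c (σ b) ≠ c b := by
  let _ : LinearOrder ι := WellOrderingRel.isWellOrder.linearOrder
  obtain ⟨e, he⟩ := Fintype.exists_equiv_fin_monotone_comp c hcard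
  have hfib' : ∀ i, #{k | c (e k) = i} ≤ m := fun i => by
    -- `convert` also reconciles the given `DecidableEq ι` with the one of the chosen order
    convert hfib i using 1
    rw [← Fintype.card_subtype, ← Fintype.card_subtype]
    exact Fintype.card_congr (e.subtypeEquiv fun _ => Iff.rfl)
  refine ⟨e.symm.trans (finAddFlip.trans e), fun b => by simp [finAddFlip_finAddFlip],
    fun b => ?_⟩
  simpa using apply_finAddFlip_ne_of_monotone he hfib' (e.symm b)

namespace Finset

variable {α ι : Type*} [DecidableEq ι] {S : Finset α} {c : α → ι} {m : ℕ}

theorem exists_involution_apply_ne_of_card_filter_le (hS : #S = m + m)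
    (hfib : ∀ i, #{a ∈ S | c a = i} ≤ m) :
    ∃ f : α → α, (∀ a ∈ S, f a ∈ S) ∧ (∀ a ∈ S, f (f a) = a) ∧ ∀ a ∈ S, c (f a) ≠ c a := by
  classical
  have hfib' : ∀ i, #{a : S | c a = i} ≤ m := fun i => by
    rw [← card_map (Function.Embedding.subtype _)]
    convert hfib i using 2
    ext a
    simp [and_comm]
  obtain ⟨σ, hσ, hσc⟩ := Fintype.exists_involutive_perm_apply_ne_of_card_fiber_le
    (fun a : S => c a) (by simpa using hS) hfib'
  refine ⟨fun a => if ha : a ∈ S then σ ⟨a, ha⟩ else a,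
    fun a ha => ?_, fun a ha => ?_, fun a ha => ?_⟩
  · simp [ha]
  · simp [ha, hσ _]
  · simpa [ha] using hσc ⟨a, ha⟩

theorem two_mul_card_filter_le_of_involution {f : α → α} (hmaps : ∀ a ∈ S, f a ∈ S)
    (hinv : ∀ a ∈ S, f (f a) = a) (hc : ∀ a ∈ S, c (f a) ≠ c a) (i : ι) :
    2 * #{a ∈ S | c a = i} ≤ #S := by
  classical
  set T := S.filter (c · = i)
  have hTS : T ⊆ S := filter_subset _ _
  have hmapsTo : ∀ a ∈ T, f a ∈ S \ T := fun a ha => by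
    simp only [T, mem_sdiff, mem_filter] at ha ⊢
    exact ⟨hmaps a ha.1, fun h => hc a ha.1 (h.2.trans ha.2.symm)⟩
  have hinj : Set.InjOn f T := fun a ha b hb hab => by
    rw [← hinv a (hTS ha), hab, hinv b (hTS hb)]
  have := card_le_card_of_injOn f hmapsTo hinj
  rw [card_sdiff_of_subset hTS] at this
  have := card_le_card hTS
  omega

theorem exists_involution_apply_ne_iff (hS : #S = 2 * m) :
    (∃ f : α → α, (∀ a ∈ S, f a ∈ S) ∧ (∀ a ∈ S, f (f a) = a) ∧ ∀ a ∈ S, c (f a) ≠ c a) ↔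
      ∀ i, #{a ∈ S | c a = i} ≤ m := by
  refine ⟨fun ⟨f, hmaps, hinv, hc⟩ i => ?_,
    exists_involution_apply_ne_of_card_filter_le (by omega)⟩
  have := two_mul_card_filter_le_of_involution hmaps hinv hc i
  omega

end Finset

section UniqueSetThrough

variable {α : Type*} {S : Finset α} {L : Finset (Set α)} {line : α → Set α}

theorem forall_apply_notMem_iff_line_apply_ne
    (hline : ∀ A ∈ S, line A ∈ L ∧ ∀ l ∈ L, A ∈ l ↔ line A = l) {f : α → α} (hmaps : ∀ A ∈ S, f A ∈ S) :
    ((∀ A ∈ S, f A ≠ A) ∧ ∀ A ∈ S, ∀ l ∈ L, A ∈ l → f A ∉ l) ↔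
      ∀ A ∈ S, line (f A) ≠ line A := by
  refine ⟨fun ⟨_, hoff⟩ A hA heq => ?_, fun hne => ⟨fun A hA heq => hne A hA (congrArg line heq),
    fun A hA l hl hAl hfAl => hne A hA ?_⟩⟩
  · have hlA := (hline A hA).1
    exact hoff A hA _ hlA (((hline A hA).2 _ hlA).2 rfl) (((hline _ (hmaps A hA)).2 _ hlA).2 heq)
  · exact (((hline _ (hmaps A hA)).2 l hl).1 hfAl).trans (((hline A hA).2 l hl).1 hAl).symm

theorem forall_ncard_inter_le_iff [DecidableEq (Set α)]
    (hline : ∀ A ∈ S, line A ∈ L ∧ ∀ l ∈ L, A ∈ l ↔ line A = l) (m : ℕ) :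
    (∀ l ∈ L, ((↑S : Set α) ∩ l).ncard ≤ m) ↔ ∀ l, #{A ∈ S | line A = l} ≤ m := by
  have hncard : ∀ l ∈ L, ((↑S : Set α) ∩ l).ncard = #{A ∈ S | line A = l} := fun l hl => by
    rw [← Set.ncard_coe_finset, coe_filter]
    congr 1
    ext A
    exact and_congr_right fun hA => (hline A hA).2 l hl
  refine ⟨fun h l => ?_, fun h l hl => hncard l hl ▸ h l⟩
  by_cases hl : l ∈ L
  · exact hncard l hl ▸ h l hl
  · rw [filter_false_of_mem fun A hA (h : line A = l) => hl (h ▸ (hline A hA).1), card_empty]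
    exact m.zero_le

end UniqueSetThrough

theorem stmt9_general (m : ℕ) (L : Finset (Set Pt))
    (S : Finset Pt) (hcard : S.card = 2 * m)
    (hcover : ∀ A ∈ S, ∃ l ∈ L, A ∈ l)
    (hone : ∀ A ∈ S, ∀ l₁ ∈ L, ∀ l₂ ∈ L, A ∈ l₁ → A ∈ l₂ → l₁ = l₂) :
    (∃ f : Pt → Pt, (∀ A ∈ S, f A ∈ S) ∧ (∀ A ∈ S, f (f A) = A) ∧ (∀ A ∈ S, f A ≠ A) ∧
        ∀ A ∈ S, ∀ l ∈ L, A ∈ l → f A ∉ l) ↔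
      ∀ l ∈ L, ((↑S : Set Pt) ∩ l).ncard ≤ m := by
  classical
  choose! line hline_mem hmem_line using hcover
  have hline : ∀ A ∈ S, line A ∈ L ∧ ∀ l ∈ L, A ∈ l ↔ line A = l := fun A hA =>
    ⟨hline_mem A hA, fun l hl =>
      ⟨hone A hA _ (hline_mem A hA) l hl (hmem_line A hA), fun h => h ▸ hmem_line A hA⟩⟩
  calc _ ↔ ∃ f : Pt → Pt, (∀ A ∈ S, f A ∈ S) ∧ (∀ A ∈ S, f (f A) = A) ∧
        ∀ A ∈ S, line (f A) ≠ line A :=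
        exists_congr fun f => and_congr_right fun hmaps =>
          and_congr_right fun _ => forall_apply_notMem_iff_line_apply_ne hline hmaps
    _ ↔ ∀ l, #{A ∈ S | line A = l} ≤ m := exists_involution_apply_ne_iff hcard
    _ ↔ _ := (forall_ncard_inter_le_iff hline m).symm

/-- **Lemma 14.** Given a finite set of lines `L` and a set `S` of `2m` points lying on these
lines, no point lying on two distinct lines, `S` can be divided into `m` pairs such that no pair
belongs to the same line iff each line contains at most `m` points of `S`. -/
theorem stmt9 (m : ℕ) (hm : 0 < m) (L : Finset (Set Pt))
    (hL : ∀ l ∈ L, ∃ p : MvPolynomial (Fin 2) ℝ, p.totalDegree = 1 ∧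
      l = {A : Pt | eval A p = 0})
    (S : Finset Pt) (hcard : S.card = 2 * m)
    (hcover : ∀ A ∈ S, ∃ l ∈ L, A ∈ l)
    (hone : ∀ A ∈ S, ∀ l₁ ∈ L, ∀ l₂ ∈ L, A ∈ l₁ → A ∈ l₂ → l₁ = l₂) :
    (∃ f : Pt → Pt, (∀ A ∈ S, f A ∈ S) ∧ (∀ A ∈ S, f (f A) = A) ∧ (∀ A ∈ S, f A ≠ A) ∧
        ∀ A ∈ S, ∀ l ∈ L, A ∈ l → f A ∉ l) ↔
      ∀ l ∈ L, ((↑S : Set Pt) ∩ l).ncard ≤ m :=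
  stmt9_general m L S hcard hcover hone
end
end

section
/- Let q be a squarefree bivariate real polynomial of exact total degree k with k ≤ n. Then: (i) every node set contained in the zero set of q with more than d(n,k) nodes is n-dependent (not n-independent); (ii) a node set X contained in the zero set of q with exactly d(n,k) nodes is n-independent if and only if every polynomial p of total degree ≤ n that vanishes at all nodes of X is divisible by q (p = q·r with deg r ≤ n−k). -/
/-!
Let `U = q · Π_{n-k}` inside `Π_n`. Since `q ≠ 0`, multiplication by `q` is injective, so
`dim U = N_{n-k}`, and every polynomial in `U` vanishes on any node set `X` lying on `q`.
A node set is `n`-independent exactly when evaluation `Π_n → ℝ^X` is surjective, and then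
rank–nullity gives `#X + dim ker = N_n` with `U ⊆ ker`, hence `#X ≤ N_n - N_{n-k}`: this is
(i). When `#X = N_n - N_{n-k}`, the same count shows that surjectivity is equivalent to
`ker = U`, i.e. to every `p ∈ Π_n` vanishing on `X` being a multiple `q r` with `r ∈ Π_{n-k}`:
this is (ii).
-/

open MvPolynomial

noncomputable section

open Module

namespace LinearMap

variable {K V W : Type*} [DivisionRing K] [AddCommGroup V] [Module K V] [AddCommGroup W]
  [Module K W] [FiniteDimensional K V]

theorem finrank_add_finrank_le_of_surjective (f : V →ₗ[K] W) (hf : Function.Surjective f)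
    {U : Submodule K V} (hU : U ≤ ker f) : finrank K W + finrank K U ≤ finrank K V := by
  rw [← f.finrank_range_add_finrank_ker, range_eq_top.mpr hf, finrank_top]
  exact Nat.add_le_add_left (Submodule.finrank_mono hU) _

theorem surjective_iff_ker_le_of_finrank_add_eq [FiniteDimensional K W] (f : V →ₗ[K] W)
    {U : Submodule K V} (hU : U ≤ ker f) (hdim : finrank K W + finrank K U = finrank K V) :
    Function.Surjective f ↔ ker f ≤ U := by
  have hrank := f.finrank_range_add_finrank_ker
  constructor
  · intro hf
    rw [range_eq_top.mpr hf, finrank_top] at hrank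
    exact (Submodule.eq_of_le_of_finrank_eq hU (by omega)).ge
  · intro hker
    rw [le_antisymm hker hU] at hrank
    exact range_eq_top.mp (Submodule.eq_top_of_finrank_eq (by omega))

end LinearMap

namespace MvPolynomial

/-- Homogenization: a monomial of degree `≤ m` in `σ` becomes one of degree exactly `m` in
`Option σ`, the new variable `none` carrying the missing degree. -/
def monomialsTotalDegreeLeEquiv (σ : Type*) [Fintype σ] [DecidableEq σ] (m : ℕ) :
    {d : σ →₀ ℕ | (d.sum fun _ e => e) ≤ m} ≃
      (Finset.univ.finsuppAntidiag m : Finset (Option σ →₀ ℕ)) where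
  toFun d := ⟨d.1.optionElim (m - d.1.sum fun _ e => e), by
    have := d.2
    simp_all [Finset.mem_finsuppAntidiag, Fintype.sum_option, Finsupp.sum_fintype]⟩
  invFun f := ⟨f.1.some, by
    have := (Finset.mem_finsuppAntidiag.mp f.2).1
    simp only [Fintype.sum_option] at this
    simp [Finsupp.sum_fintype]
    omega⟩
  left_inv d := by ext; simp
  right_inv f := by
    have := (Finset.mem_finsuppAntidiag.mp f.2).1
    simp only [Fintype.sum_option] at this
    ext (_ | _) <;> simp [Finsupp.sum_fintype]
    omega

theorem finrank_restrictTotalDegree (σ R : Type*) [Fintype σ] [CommSemiring R]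
    [StrongRankCondition R] (m : ℕ) :
    finrank R (restrictTotalDegree σ R m) = (Fintype.card σ + m).choose m := by
  classical
  rw [restrictTotalDegree, finrank_eq_nat_card_basis (basisRestrictSupport R _),
    Nat.card_congr (monomialsTotalDegreeLeEquiv σ m), Nat.card_eq_fintype_card, Fintype.card_coe,
    Finset.card_finsuppAntidiag_nat_eq_choose, Finset.card_univ, Fintype.card_option]
  congr 1
  omega

section Evaluation

variable {σ R : Type*} [CommRing R]

def evalOnNodes (n : ℕ) (X : Finset (σ → R)) :
    restrictTotalDegree σ R n →ₗ[R] (X → R) :=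
  LinearMap.pi fun A => (aeval A.1).toLinearMap ∘ₗ (restrictTotalDegree σ R n).subtype

@[simp]
theorem evalOnNodes_apply {n : ℕ} {X : Finset (σ → R)} (p : restrictTotalDegree σ R n)
    (A : X) :
    evalOnNodes n X p A = eval A.1 p.1 :=
  rfl

theorem mem_ker_evalOnNodes {n : ℕ} {X : Finset (σ → R)} {p : restrictTotalDegree σ R n} :
    p ∈ LinearMap.ker (evalOnNodes n X) ↔ ∀ A ∈ X, eval A p.1 = 0 := by
  simp only [LinearMap.mem_ker, _root_.funext_iff, Pi.zero_apply, evalOnNodes_apply,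
    Subtype.forall]

def mulLeftRestrict (q : MvPolynomial σ R) {m n : ℕ} (h : q.totalDegree + m ≤ n) :
    restrictTotalDegree σ R m →ₗ[R] restrictTotalDegree σ R n :=
  LinearMap.codRestrict _ (LinearMap.mulLeft R q ∘ₗ (restrictTotalDegree σ R m).subtype)
    fun r => (mem_restrictTotalDegree _ _ _).mpr <| (totalDegree_mul q r.1).trans <|
      (Nat.add_le_add_left ((mem_restrictTotalDegree _ _ _).mp r.2) _).trans h

variable {q : MvPolynomial σ R} {m n : ℕ} (h : q.totalDegree + m ≤ n)

theorem mem_range_mulLeftRestrict {p : restrictTotalDegree σ R n} :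
    p ∈ LinearMap.range (mulLeftRestrict q h) ↔ ∃ r, p.1 = q * r ∧ r.totalDegree ≤ m := by
  constructor
  · rintro ⟨r, rfl⟩
    exact ⟨r.1, rfl, (mem_restrictTotalDegree _ _ _).mp r.2⟩
  · rintro ⟨r, hpr, hr⟩
    exact ⟨⟨r, (mem_restrictTotalDegree _ _ _).mpr hr⟩, Subtype.ext hpr.symm⟩

theorem injective_mulLeftRestrict [IsDomain R] (hq : q ≠ 0) :
    Function.Injective (mulLeftRestrict q h) := fun _ _ hrr =>
  Subtype.ext (mul_left_cancel₀ hq (congrArg Subtype.val hrr))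

theorem range_mulLeftRestrict_le_ker_evalOnNodes {X : Finset (σ → R)}
    (hX : ∀ A ∈ X, eval A q = 0) :
    LinearMap.range (mulLeftRestrict q h) ≤ LinearMap.ker (evalOnNodes n X) := by
  rintro _ ⟨r, rfl⟩
  rw [mem_ker_evalOnNodes]
  intro A hA
  simp [mulLeftRestrict, hX A hA]

end Evaluation

end MvPolynomial

theorem finrank_restrictTotalDegree_fin_two_s18 (m : ℕ) :
    finrank ℝ (restrictTotalDegree (Fin 2) ℝ m) = Nn m := by
  rw [finrank_restrictTotalDegree, Fintype.card_fin, ← Nat.choose_symm_add, add_comm,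
    Nat.choose_two_right, Nn, mul_comm]
  rfl

theorem nIndep_iff_surjective_evalOnNodes (n : ℕ) (X : Finset Pt) :
    NIndep n X ↔ Function.Surjective (evalOnNodes n X) := by
  classical
  constructor
  · intro hX
    rw [← LinearMap.range_eq_top, eq_top_iff, ← (Pi.basisFun ℝ X).span_eq, Submodule.span_le]
    rintro _ ⟨A, rfl⟩
    obtain ⟨p, hpdeg, hpA, hpB⟩ := hX A A.2
    refine ⟨⟨p, (mem_restrictTotalDegree _ _ _).mpr hpdeg⟩, funext fun B => ?_⟩
    by_cases hBA : B = A
    · simp [hBA, hpA]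
    · simp [hBA, hpB B B.2 (Subtype.coe_ne_coe.mpr hBA)]
  · intro hE A hA
    obtain ⟨p, hp⟩ := hE (Pi.single ⟨A, hA⟩ 1)
    refine ⟨p.1, (mem_restrictTotalDegree _ _ _).mp p.2, by simpa using congrFun hp ⟨A, hA⟩,
      fun B hB hBA => ?_⟩
    simpa [Pi.single_apply, Subtype.ext_iff, hBA] using congrFun hp ⟨B, hB⟩

theorem stmt18_general (n k : ℕ) (hkn : k ≤ n) (q : MvPolynomial (Fin 2) ℝ)
    (hq : q ≠ 0) (hqdeg : q.totalDegree = k) :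
    (∀ X : Finset Pt, (∀ A ∈ X, eval A q = 0) → dnk n k < X.card → ¬ NIndep n X) ∧
    (∀ X : Finset Pt, (∀ A ∈ X, eval A q = 0) → X.card = dnk n k →
      (NIndep n X ↔ ∀ p : MvPolynomial (Fin 2) ℝ, p.totalDegree ≤ n →
        (∀ A ∈ X, eval A p = 0) →
          ∃ r : MvPolynomial (Fin 2) ℝ, p = q * r ∧ r.totalDegree ≤ n - k)) := by
  have hdeg : q.totalDegree + (n - k) ≤ n := by omega
  set U := LinearMap.range (mulLeftRestrict q hdeg)
  have hU : finrank ℝ U = Nn (n - k) := by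
    rw [LinearMap.finrank_range_of_inj (injective_mulLeftRestrict hdeg hq),
      finrank_restrictTotalDegree_fin_two_s18]
  have hUn : Nn (n - k) ≤ Nn n := by
    simpa only [hU, finrank_restrictTotalDegree_fin_two_s18] using Submodule.finrank_le U
  have hcardX (X : Finset Pt) : finrank ℝ (X → ℝ) = X.card := by simp
  refine ⟨fun X hX hcard hind => ?_, fun X hX hcard => ?_⟩
  · have := (evalOnNodes n X).finrank_add_finrank_le_of_surjective
      ((nIndep_iff_surjective_evalOnNodes n X).mp hind)
      (range_mulLeftRestrict_le_ker_evalOnNodes hdeg hX)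
    rw [hcardX, hU, finrank_restrictTotalDegree_fin_two_s18] at this
    unfold dnk at hcard
    omega
  · rw [nIndep_iff_surjective_evalOnNodes, LinearMap.surjective_iff_ker_le_of_finrank_add_eq _
      (range_mulLeftRestrict_le_ker_evalOnNodes hdeg hX)
      (by rw [hcardX, hU, finrank_restrictTotalDegree_fin_two_s18, hcard, dnk]; omega)]
    simp only [SetLike.le_def, mem_ker_evalOnNodes, mem_range_mulLeftRestrict, Subtype.forall,
      mem_restrictTotalDegree]

/-- **Proposition 4.** Let `q` be a squarefree curve of exact degree `k ≤ n`. Then (i) any node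
set in `q` with more than `d(n,k)` nodes is `n`-dependent; (ii) a node set `X ⊆ q` with exactly
`d(n,k)` nodes is `n`-independent iff every `p ∈ Π_n` vanishing on `X` is divisible by `q`. -/
theorem stmt18 (n k : ℕ) (hkn : k ≤ n) (q : MvPolynomial (Fin 2) ℝ)
    (hq : q ≠ 0) (hqdeg : q.totalDegree = k) (hsq : Squarefree q) :
    (∀ X : Finset Pt, (∀ A ∈ X, eval A q = 0) → dnk n k < X.card → ¬ NIndep n X) ∧
    (∀ X : Finset Pt, (∀ A ∈ X, eval A q = 0) → X.card = dnk n k →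
      (NIndep n X ↔ ∀ p : MvPolynomial (Fin 2) ℝ, p.totalDegree ≤ n →
        (∀ A ∈ X, eval A p = 0) →
          ∃ r : MvPolynomial (Fin 2) ℝ, p = q * r ∧ r.totalDegree ≤ n - k)) :=
  stmt18_general n k hkn q hq hqdeg
end
end
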